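/- arXiv:1511.05889 — 4 statements merged into one kernel-verified Lean document; each statement's English description precedes it below -/
import Mathlib

section
/- Let E be a real inner product space and let L : E → E be a linear map that is symmetric (⟪L h, k⟫ = ⟪h, L k⟫ for all h, k) and bijective. Let P, Q : E → E be linear maps with P + Q = id_E and P ∘ P = P, and suppose P*, Q* : E → E are linear maps satisfying the adjoint relations ⟪P* h, k⟫ = ⟪h, P k⟫ and ⟪Q* h, k⟫ = ⟪h, Q k⟫ for all h, k ∈ E. Define G(h,k) := ⟪L h, k⟫. Then the following are equivalent: (a) the range of P is G-orthogonal to the range of Q, i.e. G(P h, Q k) = 0 for all h, k ∈ E; (b) there exists a bijective linear map L̃ : E → E such that L = P* ∘ L̃ ∘ P + Q* ∘ L̃ ∘ Q. -/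
/-! The splitting is `G`-orthogonal exactly when the cross terms `G(P h, Q k)` and `G(Q h, P k)`
vanish (the second by symmetry of `L`). Expanding `h = P h + Q h` and `k = P k + Q k` then shows
`L = P* L P + Q* L Q`, so `L̃ = L` works. Conversely, for any `L̃` the form of
`P* L̃ P + Q* L̃ Q` pairs `P h` with `Q k` through `P Q = 0` and `Q P = 0`, hence vanishes. -/

theorem LinearMap.comp_eq_zero_of_add_eq_id {R M : Type*} [Ring R] [AddCommGroup M] [Module R M]
    {P Q : M →ₗ[R] M} (hPQ : P + Q = LinearMap.id) (hPproj : P ∘ₗ P = P) :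
    P ∘ₗ Q = 0 ∧ Q ∘ₗ P = 0 := by
  have hidem : IsIdempotentElem P := hPproj
  have hQ : Q = 1 - P := eq_sub_of_add_eq' hPQ
  subst hQ
  exact ⟨hidem.mul_one_sub_self, hidem.one_sub_mul_self⟩

section InnerBlocks

variable {E : Type*} [NormedAddCommGroup E] [InnerProductSpace ℝ E]
  {P Q Pstar Qstar : E →ₗ[ℝ] E}

theorem inner_apply_eq_sum_blocks (hPQ : P + Q = LinearMap.id) (A : E →ₗ[ℝ] E) (h k : E) :
    inner ℝ (A h) k = inner ℝ (A (P h)) (P k) + inner ℝ (A (P h)) (Q k)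
      + inner ℝ (A (Q h)) (P k) + inner ℝ (A (Q h)) (Q k) := by
  have hsum : ∀ x, P x + Q x = x := fun x => LinearMap.congr_fun hPQ x
  conv_lhs => rw [← hsum h, ← hsum k]
  simp only [map_add, inner_add_left, inner_add_right]
  ring

theorem inner_sandwich_apply
    (hPadj : ∀ h k : E, inner ℝ (Pstar h) k = inner ℝ h (P k))
    (hQadj : ∀ h k : E, inner ℝ (Qstar h) k = inner ℝ h (Q k)) (B : E →ₗ[ℝ] E) (h k : E) :
    inner ℝ ((Pstar ∘ₗ B ∘ₗ P + Qstar ∘ₗ B ∘ₗ Q) h) k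
      = inner ℝ (B (P h)) (P k) + inner ℝ (B (Q h)) (Q k) := by
  simp only [LinearMap.add_apply, LinearMap.comp_apply, inner_add_left, hPadj, hQadj]

theorem eq_sandwich_self_of_orthogonal {L : E →ₗ[ℝ] E}
    (hLsymm : ∀ h k : E, inner ℝ (L h) k = inner ℝ h (L k)) (hPQ : P + Q = LinearMap.id)
    (hPadj : ∀ h k : E, inner ℝ (Pstar h) k = inner ℝ h (P k))
    (hQadj : ∀ h k : E, inner ℝ (Qstar h) k = inner ℝ h (Q k))
    (hG : ∀ h k : E, inner ℝ (L (P h)) (Q k) = 0) :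
    L = Pstar ∘ₗ L ∘ₗ P + Qstar ∘ₗ L ∘ₗ Q := by
  refine LinearMap.ext fun h => ext_inner_right ℝ fun k => ?_
  have hG' : inner ℝ (L (Q h)) (P k) = 0 := by
    rw [hLsymm, real_inner_comm, hG]
  rw [inner_sandwich_apply hPadj hQadj, inner_apply_eq_sum_blocks hPQ, hG, hG']
  ring

theorem inner_sandwich_apply_proj_eq_zero (hPQ : P + Q = LinearMap.id) (hPproj : P ∘ₗ P = P)
    (hPadj : ∀ h k : E, inner ℝ (Pstar h) k = inner ℝ h (P k))
    (hQadj : ∀ h k : E, inner ℝ (Qstar h) k = inner ℝ h (Q k)) (B : E →ₗ[ℝ] E) (h k : E) :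
    inner ℝ ((Pstar ∘ₗ B ∘ₗ P + Qstar ∘ₗ B ∘ₗ Q) (P h)) (Q k) = 0 := by
  obtain ⟨hPQ0, hQP0⟩ := LinearMap.comp_eq_zero_of_add_eq_id hPQ hPproj
  rw [inner_sandwich_apply hPadj hQadj, ← LinearMap.comp_apply P Q, ← LinearMap.comp_apply Q P,
    hPQ0, hQP0]
  simp only [LinearMap.zero_apply, map_zero, inner_zero_left, inner_zero_right, add_zero]

end InnerBlocks

/-- Abstract decomposition theorem: for a symmetric bijective inertia operator `L`
on a real inner product space `E`, and complementary projections `P, Q` with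
adjoints `Pstar, Qstar`, the splitting determined by `P, Q` is orthogonal for the
bilinear form `G(h,k) = ⟪L h, k⟫` iff `L = P* ∘ L̃ ∘ P + Q* ∘ L̃ ∘ Q` for some
bijective linear map `L̃`. -/
theorem decomposition_theorem {E : Type*} [NormedAddCommGroup E] [InnerProductSpace ℝ E]
    (L : E →ₗ[ℝ] E)
    (hLsymm : ∀ h k : E, (inner ℝ (L h) k : ℝ) = inner ℝ h (L k))
    (hLbij : Function.Bijective L)
    (P Q Pstar Qstar : E →ₗ[ℝ] E)
    (hPQ : P + Q = LinearMap.id)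
    (hPproj : P ∘ₗ P = P)
    (hPadj : ∀ h k : E, (inner ℝ (Pstar h) k : ℝ) = inner ℝ h (P k))
    (hQadj : ∀ h k : E, (inner ℝ (Qstar h) k : ℝ) = inner ℝ h (Q k)) :
    (∀ h k : E, (inner ℝ (L (P h)) (Q k) : ℝ) = 0) ↔
      ∃ Lt : E →ₗ[ℝ] E, Function.Bijective Lt ∧
        L = Pstar ∘ₗ Lt ∘ₗ P + Qstar ∘ₗ Lt ∘ₗ Q := by
  constructor
  · intro hG
    exact ⟨L, hLbij, eq_sandwich_self_of_orthogonal hLsymm hPQ hPadj hQadj hG⟩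
  · rintro ⟨Lt, -, hL⟩ h k
    rw [hL]
    exact inner_sandwich_apply_proj_eq_zero hPQ hPproj hPadj hQadj Lt h k
end

section
/- Let c : ℝ → ℝ² be a smooth 2π-periodic regular curve (c'(θ) ≠ 0 for all θ), with unit tangent v = c'/‖c'‖ and unit normal n = J v. Let E be the real vector space of smooth 2π-periodic maps h : ℝ → ℝ², equipped with the inner product ⟪h,k⟫ := ∫₀^{2π} ⟨h(θ), k(θ)⟩ ‖c'(θ)‖ dθ, and let P^tan, P^nor : E → E be the pointwise projections P^tan(h) = ⟨h,v⟩ v and P^nor(h) = ⟨h,n⟩ n. Let L : E → E be a linear map that is symmetric with respect to ⟪·,·⟫ and bijective. Then ⟪L(P^tan h), P^nor k⟫ = 0 for all h, k ∈ E if and only if there exists a bijective linear map L̃ : E → E such that L = P^tan ∘ L̃ ∘ P^tan + P^nor ∘ L̃ ∘ P^nor. -/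
open Real Function

/-- Rotation by `π/2` in the plane. -/
noncomputable def Jrot (x : EuclideanSpace ℝ (Fin 2)) : EuclideanSpace ℝ (Fin 2) :=
  (WithLp.equiv 2 (Fin 2 → ℝ)).symm ![-(x 1), x 0]

/-- The unit tangent vector field `v = c'/‖c'‖` of a curve `c`. -/
noncomputable def unitTangent (c : ℝ → EuclideanSpace ℝ (Fin 2)) (θ : ℝ) :
    EuclideanSpace ℝ (Fin 2) :=
  ‖deriv c θ‖⁻¹ • deriv c θ

/-- The unit normal vector field `n = J v` of a curve `c`. -/
noncomputable def unitNormal (c : ℝ → EuclideanSpace ℝ (Fin 2)) (θ : ℝ) :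
    EuclideanSpace ℝ (Fin 2) :=
  Jrot (unitTangent c θ)

/-- The arc-length derivative `D_s f = f'/‖c'‖` along the curve `c`. -/
noncomputable def arcDeriv (c : ℝ → EuclideanSpace ℝ (Fin 2)) {F : Type*}
    [NormedAddCommGroup F] [NormedSpace ℝ F] (f : ℝ → F) (θ : ℝ) : F :=
  ‖deriv c θ‖⁻¹ • deriv f θ

/-- The curvature `κ = ⟨D_s v, n⟩` of a curve `c`. -/
noncomputable def curvature (c : ℝ → EuclideanSpace ℝ (Fin 2)) (θ : ℝ) : ℝ :=
  inner ℝ (arcDeriv c (unitTangent c) θ) (unitNormal c θ)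

/-- The space of smooth `2π`-periodic maps `ℝ → ℝ²` (tangent vectors to the
space of immersed loops). -/
noncomputable def smoothLoops : Submodule ℝ (ℝ → EuclideanSpace ℝ (Fin 2)) where
  carrier := {h | ContDiff ℝ (⊤ : ℕ∞) h ∧ Function.Periodic h (2 * π)}
  add_mem' := fun hf hg => ⟨hf.1.add hg.1, hf.2.add hg.2⟩
  zero_mem' := ⟨contDiff_const, fun _ => rfl⟩
  smul_mem' := fun r f hf => ⟨contDiff_const.smul hf.1, fun θ => by
    simp only [Pi.smul_apply, hf.2 θ]⟩

/-- The reparametrization-invariant `L²` inner product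
`⟪h,k⟫ = ∫₀^{2π} ⟨h(θ), k(θ)⟩ ‖c'(θ)‖ dθ` on `smoothLoops`. -/
noncomputable def loopInner (c : ℝ → EuclideanSpace ℝ (Fin 2))
    (h k : smoothLoops) : ℝ :=
  ∫ θ in (0:ℝ)..(2 * π), (inner ℝ (h.1 θ) (k.1 θ) : ℝ) * ‖deriv c θ‖

lemma inner_two (x y : EuclideanSpace ℝ (Fin 2)) : (inner ℝ x y : ℝ) = x 0 * y 0 + x 1 * y 1 := by
  simp [PiLp.inner_apply, RCLike.inner_apply, Fin.sum_univ_two]; ring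

lemma Jrot_zero (x : EuclideanSpace ℝ (Fin 2)) : Jrot x 0 = -(x 1) := by
  simp [Jrot, PiLp.toLp_apply]

lemma Jrot_one (x : EuclideanSpace ℝ (Fin 2)) : Jrot x 1 = x 0 := by
  simp [Jrot, PiLp.toLp_apply]

lemma inner_Jrot_self (x : EuclideanSpace ℝ (Fin 2)) : (inner ℝ x (Jrot x) : ℝ) = 0 := by
  simp [inner_two, Jrot_zero, Jrot_one]; ring

lemma inner_Jrot_Jrot (x : EuclideanSpace ℝ (Fin 2)) :
    (inner ℝ (Jrot x) (Jrot x) : ℝ) = (inner ℝ x x : ℝ) := by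
  rw [inner_two, inner_two, Jrot_zero, Jrot_one]; ring

lemma ortho_decomp (x w : EuclideanSpace ℝ (Fin 2)) (hx : (inner ℝ x x : ℝ) = 1) :
    (inner ℝ w x : ℝ) • x + (inner ℝ w (Jrot x) : ℝ) • Jrot x = w := by
  rw [inner_two] at hx
  ext i
  fin_cases i
  · simp [inner_two, Jrot_zero, Jrot_one, PiLp.add_apply, PiLp.smul_apply, smul_eq_mul]
    linear_combination w 0 * hx
  · simp [inner_two, Jrot_zero, Jrot_one, PiLp.add_apply, PiLp.smul_apply, smul_eq_mul]
    linear_combination w 1 * hx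

lemma inner_unitTangent_self (c : ℝ → EuclideanSpace ℝ (Fin 2))
    (hreg : ∀ θ : ℝ, deriv c θ ≠ 0) (θ : ℝ) :
    (inner ℝ (unitTangent c θ) (unitTangent c θ) : ℝ) = 1 := by
  have hn : ‖unitTangent c θ‖ = 1 := by
    rw [unitTangent, norm_smul, norm_inv, norm_norm,
      inv_mul_cancel₀ (norm_ne_zero_iff.mpr (hreg θ))]
  rw [real_inner_self_eq_norm_sq, hn]; norm_num

/-- `loopInner` is symmetric. -/
lemma loopInner_comm (c : ℝ → EuclideanSpace ℝ (Fin 2)) (h k : smoothLoops) :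
    loopInner c h k = loopInner c k h := by
  unfold loopInner
  apply intervalIntegral.integral_congr
  intro θ _
  show (inner ℝ (h.1 θ) (k.1 θ) : ℝ) * ‖deriv c θ‖ = (inner ℝ (k.1 θ) (h.1 θ) : ℝ) * ‖deriv c θ‖
  rw [real_inner_comm]

/-- Nondegeneracy of `loopInner` on smooth loops. -/
lemma loopInner_self_eq_zero (c : ℝ → EuclideanSpace ℝ (Fin 2))
    (hc : ContDiff ℝ (⊤ : ℕ∞) c) (hreg : ∀ θ : ℝ, deriv c θ ≠ 0)
    (h : smoothLoops) (hz : loopInner c h h = 0) : h = 0 := by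
  set g : ℝ → ℝ := fun θ => (inner ℝ (h.1 θ) (h.1 θ) : ℝ) * ‖deriv c θ‖ with hg
  have hch : Continuous h.1 := h.2.1.continuous
  have hcd : Continuous (deriv c) := hc.continuous_deriv (by simp)
  have hgc : Continuous g := ((hch.inner hch).mul hcd.norm)
  have hgnn : ∀ θ, 0 ≤ g θ := fun θ =>
    mul_nonneg real_inner_self_nonneg (norm_nonneg _)
  have h2π : (0:ℝ) ≤ 2 * π := by positivity
  have hae : g =ᵐ[MeasureTheory.volume.restrict (Set.Ioc 0 (2*π))] 0 := by
    refine (intervalIntegral.integral_eq_zero_iff_of_le_of_nonneg_ae h2π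
      (Filter.Eventually.of_forall hgnn) (hgc.intervalIntegrable _ _)).1 hz
  have heq : Set.EqOn g 0 (Set.Ioc 0 (2*π)) := by
    refine MeasureTheory.Measure.eqOn_of_ae_eq hae hgc.continuousOn
      continuousOn_const ?_
    rw [interior_Ioc, closure_Ioo (by positivity : (0:ℝ) ≠ 2*π).symm.symm]
    · exact Set.Ioc_subset_Icc_self
  have hzero : ∀ θ ∈ Set.Ioc (0:ℝ) (2*π), h.1 θ = 0 := by
    intro θ hθ
    have := heq hθ
    simp only [hg, Pi.zero_apply] at this
    have hnz : ‖deriv c θ‖ ≠ 0 := norm_ne_zero_iff.mpr (hreg θ)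
    have : (inner ℝ (h.1 θ) (h.1 θ) : ℝ) = 0 := by
      rcases mul_eq_zero.1 this with h' | h'
      · exact h'
      · exact absurd h' hnz
    exact inner_self_eq_zero.1 this
  have hall : ∀ θ, h.1 θ = 0 := by
    intro θ
    obtain ⟨y, hy, hyeq⟩ := (h.2.2).exists_mem_Ico₀ (by positivity) θ
    rw [hyeq]
    rcases eq_or_lt_of_le hy.1 with h0 | h0
    · rw [← h0]
      have := h.2.2 0
      rw [zero_add] at this
      rw [← this]
      exact hzero _ ⟨by positivity, le_refl _⟩
    · exact hzero _ ⟨h0, hy.2.le⟩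
  exact Subtype.ext (funext fun θ => hall θ)

lemma loopInner_eq_zero_of_forall (c : ℝ → EuclideanSpace ℝ (Fin 2))
    (hc : ContDiff ℝ (⊤ : ℕ∞) c) (hreg : ∀ θ : ℝ, deriv c θ ≠ 0)
    (u : smoothLoops) (hu : ∀ k : smoothLoops, loopInner c u k = 0) : u = 0 :=
  loopInner_self_eq_zero c hc hreg u (hu u)

/-- Concrete instance of the decomposition theorem for the splitting into
tangential and normal vector fields (main theorem of Bauer–Harms 2015): the
pointwise tangential/normal projections are `G^L`-orthogonal iff
`L = P^tan ∘ L̃ ∘ P^tan + P^nor ∘ L̃ ∘ P^nor` for a bijective `L̃`. -/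
theorem tangential_normal_decomposition
    (c : ℝ → EuclideanSpace ℝ (Fin 2))
    (hc : ContDiff ℝ (⊤ : ℕ∞) c) (hcper : Function.Periodic c (2 * π))
    (hreg : ∀ θ : ℝ, deriv c θ ≠ 0)
    (Ptan Pnor : smoothLoops →ₗ[ℝ] smoothLoops)
    (hPtan : ∀ (h : smoothLoops) (θ : ℝ),
      (Ptan h).1 θ = (inner ℝ (h.1 θ) (unitTangent c θ) : ℝ) • unitTangent c θ)
    (hPnor : ∀ (h : smoothLoops) (θ : ℝ),
      (Pnor h).1 θ = (inner ℝ (h.1 θ) (unitNormal c θ) : ℝ) • unitNormal c θ)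
    (L : smoothLoops →ₗ[ℝ] smoothLoops)
    (hLsymm : ∀ h k : smoothLoops, loopInner c (L h) k = loopInner c h (L k))
    (hLbij : Function.Bijective L) :
    (∀ h k : smoothLoops, loopInner c (L (Ptan h)) (Pnor k) = 0) ↔
      ∃ Lt : smoothLoops →ₗ[ℝ] smoothLoops, Function.Bijective Lt ∧
        L = Ptan ∘ₗ Lt ∘ₗ Ptan + Pnor ∘ₗ Lt ∘ₗ Pnor := by
  have hvv : ∀ θ, (inner ℝ (unitTangent c θ) (unitTangent c θ) : ℝ) = 1 :=
    inner_unitTangent_self c hreg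
  have hvn : ∀ θ, (inner ℝ (unitTangent c θ) (unitNormal c θ) : ℝ) = 0 :=
    fun θ => inner_Jrot_self _
  have hnv : ∀ θ, (inner ℝ (unitNormal c θ) (unitTangent c θ) : ℝ) = 0 :=
    fun θ => by rw [real_inner_comm]; exact hvn θ
  have hnn : ∀ θ, (inner ℝ (unitNormal c θ) (unitNormal c θ) : ℝ) = 1 :=
    fun θ => by rw [unitNormal, inner_Jrot_Jrot]; exact hvv θ
  -- projection algebra
  have hsum : ∀ h : smoothLoops, Ptan h + Pnor h = h := by
    intro h
    apply Subtype.ext; funext θ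
    have : ((Ptan h + Pnor h) : smoothLoops).1 θ = (Ptan h).1 θ + (Pnor h).1 θ := rfl
    rw [this, hPtan, hPnor, unitNormal]
    exact ortho_decomp _ _ (hvv θ)
  have hPtt : ∀ h : smoothLoops, Ptan (Ptan h) = Ptan h := by
    intro h; apply Subtype.ext; funext θ
    rw [hPtan, hPtan h θ, real_inner_smul_left, hvv θ, mul_one]
  have hPnt : ∀ h : smoothLoops, Pnor (Ptan h) = 0 := by
    intro h; apply Subtype.ext; funext θ
    rw [hPnor, hPtan h θ, real_inner_smul_left, hvn θ, mul_zero, zero_smul]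
    rfl
  have hPtn : ∀ h : smoothLoops, Ptan (Pnor h) = 0 := by
    intro h; apply Subtype.ext; funext θ
    rw [hPtan, hPnor h θ, real_inner_smul_left, hnv θ, mul_zero, zero_smul]
    rfl
  have hPnn : ∀ h : smoothLoops, Pnor (Pnor h) = Pnor h := by
    intro h; apply Subtype.ext; funext θ
    rw [hPnor, hPnor h θ, real_inner_smul_left, hnn θ, mul_one]
  -- orthogonality of ranges
  have hortho : ∀ a b : smoothLoops, loopInner c (Ptan a) (Pnor b) = 0 := by
    intro a b
    unfold loopInner
    have : ∀ θ ∈ Set.uIcc (0:ℝ) (2*π),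
        (inner ℝ ((Ptan a).1 θ) ((Pnor b).1 θ) : ℝ) * ‖deriv c θ‖ = 0 := by
      intro θ _
      rw [hPtan, hPnor, real_inner_smul_left, real_inner_smul_right, hvn θ]
      ring
    rw [intervalIntegral.integral_congr this]
    simp
  -- symmetry of the projections
  have hPtsymm : ∀ a b : smoothLoops, loopInner c (Ptan a) b = loopInner c a (Ptan b) := by
    intro a b
    unfold loopInner
    apply intervalIntegral.integral_congr
    intro θ _
    show (inner ℝ ((Ptan a).1 θ) (b.1 θ) : ℝ) * ‖deriv c θ‖
      = (inner ℝ (a.1 θ) ((Ptan b).1 θ) : ℝ) * ‖deriv c θ‖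
    rw [hPtan, hPtan, real_inner_smul_left, real_inner_smul_right,
      real_inner_comm (b.1 θ) (unitTangent c θ)]
    ring
  have hPnsymm : ∀ a b : smoothLoops, loopInner c (Pnor a) b = loopInner c a (Pnor b) := by
    intro a b
    unfold loopInner
    apply intervalIntegral.integral_congr
    intro θ _
    show (inner ℝ ((Pnor a).1 θ) (b.1 θ) : ℝ) * ‖deriv c θ‖
      = (inner ℝ (a.1 θ) ((Pnor b).1 θ) : ℝ) * ‖deriv c θ‖
    rw [hPnor, hPnor, real_inner_smul_left, real_inner_smul_right,
      real_inner_comm (b.1 θ) (unitNormal c θ)]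
    ring
  constructor
  · intro horth
    refine ⟨L, hLbij, ?_⟩
    have hA : ∀ h : smoothLoops, Pnor (L (Ptan h)) = 0 := by
      intro h
      apply loopInner_eq_zero_of_forall c hc hreg
      intro k
      rw [hPnsymm]
      exact horth h k
    have hB : ∀ h : smoothLoops, Ptan (L (Pnor h)) = 0 := by
      intro h
      apply loopInner_eq_zero_of_forall c hc hreg
      intro k
      rw [hPtsymm, hLsymm, loopInner_comm]
      exact horth k h
    apply LinearMap.ext
    intro h
    have e1 : L h = L (Ptan h) + L (Pnor h) := by
      rw [← map_add, hsum]
    have e2 : L (Ptan h) = Ptan (L (Ptan h)) := by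
      have := hsum (L (Ptan h))
      rw [hA h, add_zero] at this
      exact this.symm
    have e3 : L (Pnor h) = Pnor (L (Pnor h)) := by
      have := hsum (L (Pnor h))
      rw [hB h, zero_add] at this
      exact this.symm
    simp only [LinearMap.add_apply, LinearMap.comp_apply]
    calc L h = L (Ptan h) + L (Pnor h) := e1
      _ = Ptan (L (Ptan h)) + Pnor (L (Pnor h)) := by rw [← e2, ← e3]
  · rintro ⟨Lt, hLtbij, rfl⟩
    intro h k
    have : ∀ x : smoothLoops,
        (Ptan ∘ₗ Lt ∘ₗ Ptan + Pnor ∘ₗ Lt ∘ₗ Pnor) (Ptan x) = Ptan (Lt (Ptan x)) := by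
      intro x
      simp only [LinearMap.add_apply, LinearMap.comp_apply]
      rw [hPtt, hPnt, map_zero, map_zero, add_zero]
    rw [this h]
    exact hortho _ _
end

section
/- Let c : ℝ → ℝ² be a smooth regular curve (c'(θ) ≠ 0 for all θ), with unit tangent v = c'/‖c'‖, unit normal n = J v, arc-length derivative D_s f = f'/‖c'‖, and curvature κ = ⟨D_s v, n⟩. Then for all smooth functions a, b : ℝ → ℝ, the map h := a n + b v satisfies, for every θ: ⟨D_s² h(θ), v(θ)⟩ + κ(θ) ⟨D_s h(θ), n(θ)⟩ = D_s² b(θ) - D_s(a κ)(θ). -/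
open Real Function

namespace ArcAux
abbrev E2 := EuclideanSpace ℝ (Fin 2)

noncomputable def Jc : E2 →L[ℝ] E2 :=
  LinearMap.toContinuousLinearMap
  { toFun := Jrot
    map_add' := by intro x y; ext i; fin_cases i <;> (simp [Jrot]; try ring)
    map_smul' := by intro s x; ext i; fin_cases i <;> simp [Jrot, mul_comm] }

lemma Jc_apply (x : E2) : Jc x = Jrot x := rfl

variable {c : ℝ → E2} (hc : ContDiff ℝ (⊤ : ℕ∞) c) (hreg : ∀ θ : ℝ, deriv c θ ≠ 0)

include hc in
lemma hc' : ContDiff ℝ (⊤ : ℕ∞) (deriv c) :=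
  (contDiff_infty_iff_deriv.mp (hc.of_le (by simp))).2

include hc hreg in
lemma hρ : ContDiff ℝ (⊤ : ℕ∞) (fun θ => ‖deriv c θ‖⁻¹) :=
  (((hc' hc).norm ℝ hreg).inv (fun θ => norm_ne_zero_iff.mpr (hreg θ)))

include hc hreg in
lemma hv : ContDiff ℝ (⊤ : ℕ∞) (unitTangent c) :=
  (hρ hc hreg).smul (hc' hc)

include hc hreg in
lemma hn : ContDiff ℝ (⊤ : ℕ∞) (unitNormal c) := by
  have h1 : unitNormal c = fun θ => Jc (unitTangent c θ) := rfl
  rw [h1]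
  exact Jc.contDiff.comp (hv hc hreg)

include hc hreg in
lemma deriv_n (θ : ℝ) : deriv (unitNormal c) θ = Jrot (deriv (unitTangent c) θ) := by
  have h2 : HasDerivAt (unitTangent c) (deriv (unitTangent c) θ) θ :=
    (((hv hc hreg).differentiable (by simp)).differentiableAt).hasDerivAt
  have h3 : HasDerivAt (unitNormal c) (Jc (deriv (unitTangent c) θ)) θ :=
    (Jc.hasFDerivAt).comp_hasDerivAt θ h2
  rw [h3.deriv, Jc_apply]

lemma inner_eq (x y : E2) : (inner ℝ x y : ℝ) = x 0 * y 0 + x 1 * y 1 := by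
  simp [PiLp.inner_apply, Fin.sum_univ_two]; ring

lemma Jrot_Jrot (x : E2) : Jrot (Jrot x) = -x := by
  ext i; fin_cases i <;> simp [Jrot]

lemma Jrot_smul (s : ℝ) (x : E2) : Jrot (s • x) = s • Jrot x := Jc.map_smul s x

include hreg in
lemma vv_one (θ : ℝ) : (inner ℝ (unitTangent c θ) (unitTangent c θ) : ℝ) = 1 := by
  rw [real_inner_self_eq_norm_sq, unitTangent, norm_smul, norm_inv, norm_norm,
    inv_mul_cancel₀ (norm_ne_zero_iff.mpr (hreg θ))]
  norm_num

lemma vn_zero (θ : ℝ) : (inner ℝ (unitTangent c θ) (unitNormal c θ) : ℝ) = 0 := by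
  rw [unitNormal, inner_eq, Jrot]; simp; ring

include hreg in
lemma nn_one (θ : ℝ) : (inner ℝ (unitNormal c θ) (unitNormal c θ) : ℝ) = 1 := by
  have := vv_one hreg (c := c) θ
  rw [unitNormal, inner_eq, Jrot]
  rw [inner_eq] at this
  simp only [WithLp.equiv_symm_apply, WithLp.ofLp_toLp, Matrix.cons_val_zero, Matrix.cons_val_one,
    Matrix.head_cons]
  nlinarith [this]

include hreg in
lemma basis_expand (θ : ℝ) (u : E2) :
    u = (inner ℝ u (unitTangent c θ) : ℝ) • unitTangent c θ
      + (inner ℝ u (unitNormal c θ) : ℝ) • unitNormal c θ := by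
  have h1 := vv_one hreg (c := c) θ
  rw [inner_eq] at h1
  ext i
  fin_cases i
  · simp [unitNormal, inner_eq, Jrot]
    linear_combination (-(u 0)) * h1
  · simp [unitNormal, inner_eq, Jrot]
    linear_combination (-(u 1)) * h1

lemma diffAt {F : Type*} [NormedAddCommGroup F] [NormedSpace ℝ F] {f : ℝ → F}
    (hf : ContDiff ℝ (⊤ : ℕ∞) f) (θ : ℝ) : DifferentiableAt ℝ f θ :=
  (hf.differentiable (by simp)).differentiableAt

include hc hreg in
lemma dv_perp (θ : ℝ) :
    (inner ℝ (deriv (unitTangent c) θ) (unitTangent c θ) : ℝ) = 0 := by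
  have hconst : (fun t => (inner ℝ (unitTangent c t) (unitTangent c t) : ℝ)) = fun _ => (1:ℝ) :=
    funext fun t => vv_one hreg t
  have hd : deriv (fun t => (inner ℝ (unitTangent c t) (unitTangent c t) : ℝ)) θ = 0 := by
    rw [hconst]; simp
  rw [deriv_inner_apply ℝ (diffAt (hv hc hreg) θ) (diffAt (hv hc hreg) θ)] at hd
  rw [real_inner_comm] at hd
  linarith [hd]

include hc hreg in
lemma deriv_v_eq (θ : ℝ) :
    deriv (unitTangent c) θ
      = (inner ℝ (deriv (unitTangent c) θ) (unitNormal c θ) : ℝ) • unitNormal c θ := by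
  conv_lhs => rw [basis_expand hreg θ (deriv (unitTangent c) θ)]
  rw [dv_perp hc hreg, zero_smul, zero_add]

include hc hreg in
lemma deriv_n_eq (θ : ℝ) :
    deriv (unitNormal c) θ
      = -((inner ℝ (deriv (unitTangent c) θ) (unitNormal c θ) : ℝ)) • unitTangent c θ := by
  rw [deriv_n hc hreg θ]
  conv_lhs => rw [deriv_v_eq hc hreg θ]
  rw [Jrot_smul, unitNormal, Jrot_Jrot]
  module

end ArcAux

open ArcAux in
/-- Central computation of Lemma 3.2: for `h = a n + b v`,
`⟨D_s² h, v⟩ + κ ⟨D_s h, n⟩ = D_s² b - D_s(a κ)`. -/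
theorem arc_condition_for_an_plus_bv (c : ℝ → EuclideanSpace ℝ (Fin 2))
    (hc : ContDiff ℝ (⊤ : ℕ∞) c) (hreg : ∀ θ : ℝ, deriv c θ ≠ 0)
    (a b : ℝ → ℝ) (ha : ContDiff ℝ (⊤ : ℕ∞) a) (hb : ContDiff ℝ (⊤ : ℕ∞) b)
    (h : ℝ → EuclideanSpace ℝ (Fin 2))
    (hdef : ∀ θ : ℝ, h θ = a θ • unitNormal c θ + b θ • unitTangent c θ) (θ : ℝ) :
    (inner ℝ (arcDeriv c (arcDeriv c h) θ) (unitTangent c θ) : ℝ) +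
        curvature c θ * (inner ℝ (arcDeriv c h θ) (unitNormal c θ) : ℝ) =
      arcDeriv c (arcDeriv c b) θ - arcDeriv c (fun ϑ => a ϑ * curvature c ϑ) θ := by
  have hvS := hv hc hreg
  have hnS := hn hc hreg
  have hρS := hρ hc hreg
  have hdvS : ContDiff ℝ (⊤:ℕ∞) (deriv (unitTangent c)) := (contDiff_infty_iff_deriv.mp hvS).2
  have hdnS : ContDiff ℝ (⊤:ℕ∞) (deriv (unitNormal c)) := (contDiff_infty_iff_deriv.mp hnS).2
  have haS : ContDiff ℝ (⊤:ℕ∞) a := ha.of_le (by simp)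
  have hbS : ContDiff ℝ (⊤:ℕ∞) b := hb.of_le (by simp)
  have hdaS : ContDiff ℝ (⊤:ℕ∞) (deriv a) := (contDiff_infty_iff_deriv.mp haS).2
  have hdbS : ContDiff ℝ (⊤:ℕ∞) (deriv b) := (contDiff_infty_iff_deriv.mp hbS).2
  have hkS : ContDiff ℝ (⊤:ℕ∞)
      (fun t => (inner ℝ (deriv (unitTangent c) t) (unitNormal c t) : ℝ)) :=
    hdvS.inner ℝ hnS
  have hκfun : curvature c
      = fun t => ‖deriv c t‖⁻¹ * (inner ℝ (deriv (unitTangent c) t) (unitNormal c t) : ℝ) := by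
    funext t
    rw [curvature, arcDeriv, real_inner_smul_left]
  have hκS : ContDiff ℝ (⊤:ℕ∞) (curvature c) := by rw [hκfun]; exact hρS.mul hkS
  have hhfun : h = fun t => a t • unitNormal c t + b t • unitTangent c t := funext hdef
  have hhS : ContDiff ℝ (⊤:ℕ∞) h := by rw [hhfun]; exact (haS.smul hnS).add (hbS.smul hvS)
  have hdhS : ContDiff ℝ (⊤:ℕ∞) (deriv h) := (contDiff_infty_iff_deriv.mp hhS).2
  have hwS : ContDiff ℝ (⊤:ℕ∞) (arcDeriv c h) := hρS.smul hdhS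
  have hnv : ∀ t, (inner ℝ (unitNormal c t) (unitTangent c t) : ℝ) = 0 := fun t => by
    rw [real_inner_comm]; exact vn_zero t
  have hderivh : ∀ t, deriv h t
      = a t • deriv (unitNormal c) t + deriv a t • unitNormal c t
        + (b t • deriv (unitTangent c) t + deriv b t • unitTangent c t) := by
    intro t
    rw [hhfun, deriv_fun_add (f := fun t => a t • unitNormal c t)
        (g := fun t => b t • unitTangent c t) (diffAt (haS.smul hnS) t) (diffAt (hbS.smul hvS) t),
      deriv_fun_smul (diffAt haS t) (diffAt hnS t), deriv_fun_smul (diffAt hbS t) (diffAt hvS t)]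
  -- ⟪w, v⟫ as a function
  have hwv : ∀ t, (inner ℝ (arcDeriv c h t) (unitTangent c t) : ℝ)
      = ‖deriv c t‖⁻¹ * deriv b t - a t * curvature c t := by
    intro t
    rw [show arcDeriv c h t = ‖deriv c t‖⁻¹ • deriv h t from rfl, real_inner_smul_left,
      hderivh t, deriv_n_eq hc hreg t, deriv_v_eq hc hreg t]
    simp only [inner_add_left, real_inner_smul_left, vv_one hreg, hnv, vn_zero,
      nn_one hreg, neg_smul, inner_neg_left, mul_zero, mul_one, hκfun]
    ring
  -- ⟪w, n⟫ at θ
  have hwn : (inner ℝ (arcDeriv c h θ) (unitNormal c θ) : ℝ)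
      = ‖deriv c θ‖⁻¹ * (deriv a θ
          + b θ * (inner ℝ (deriv (unitTangent c) θ) (unitNormal c θ) : ℝ)) := by
    rw [show arcDeriv c h θ = ‖deriv c θ‖⁻¹ • deriv h θ from rfl, real_inner_smul_left,
      hderivh θ, deriv_n_eq hc hreg θ, deriv_v_eq hc hreg θ]
    simp only [inner_add_left, real_inner_smul_left, vv_one hreg, hnv, vn_zero,
      nn_one hreg, neg_smul, inner_neg_left, mul_zero, mul_one]
    ring
  have hρbS : ContDiff ℝ (⊤:ℕ∞) (fun t => ‖deriv c t‖⁻¹ * deriv b t) := hρS.mul hdbS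
  have haκS : ContDiff ℝ (⊤:ℕ∞) (fun t => a t * curvature c t) := haS.mul hκS
  -- key derivative identity
  have key := deriv_inner_apply ℝ (diffAt hwS θ) (diffAt hvS θ)
  have e1 : (fun t => (inner ℝ (arcDeriv c h t) (unitTangent c t) : ℝ))
      = fun t => ‖deriv c t‖⁻¹ * deriv b t - a t * curvature c t := funext hwv
  rw [e1, deriv_fun_sub (diffAt hρbS θ) (diffAt haκS θ)] at key
  have e2 : (inner ℝ (arcDeriv c h θ) (deriv (unitTangent c) θ) : ℝ)
      = (inner ℝ (deriv (unitTangent c) θ) (unitNormal c θ) : ℝ)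
        * (inner ℝ (arcDeriv c h θ) (unitNormal c θ) : ℝ) := by
    conv_lhs => rw [deriv_v_eq hc hreg θ]
    rw [real_inner_smul_right]
  rw [e2] at key
  -- assemble
  have eL1 : (inner ℝ (arcDeriv c (arcDeriv c h) θ) (unitTangent c θ) : ℝ)
      = ‖deriv c θ‖⁻¹ * (inner ℝ (deriv (arcDeriv c h) θ) (unitTangent c θ) : ℝ) := by
    rw [show arcDeriv c (arcDeriv c h) θ = ‖deriv c θ‖⁻¹ • deriv (arcDeriv c h) θ from rfl,
      real_inner_smul_left]
  have eR1 : arcDeriv c (arcDeriv c b) θ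
      = ‖deriv c θ‖⁻¹ * deriv (fun t => ‖deriv c t‖⁻¹ * deriv b t) θ := by
    rw [show arcDeriv c (arcDeriv c b) θ = ‖deriv c θ‖⁻¹ • deriv (arcDeriv c b) θ from rfl,
      show arcDeriv c b = fun t => ‖deriv c t‖⁻¹ * deriv b t from rfl, smul_eq_mul]
  have eR2 : arcDeriv c (fun ϑ => a ϑ * curvature c ϑ) θ
      = ‖deriv c θ‖⁻¹ * deriv (fun t => a t * curvature c t) θ := by
    rw [show arcDeriv c (fun ϑ => a ϑ * curvature c ϑ) θ
        = ‖deriv c θ‖⁻¹ • deriv (fun ϑ => a ϑ * curvature c ϑ) θ from rfl, smul_eq_mul]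
  have hκθ : curvature c θ
      = ‖deriv c θ‖⁻¹ * (inner ℝ (deriv (unitTangent c) θ) (unitNormal c θ) : ℝ) := by
    rw [hκfun]
  rw [eL1, eR1, eR2, hκθ, hwn]
  have key' : (inner ℝ (deriv (arcDeriv c h) θ) (unitTangent c θ) : ℝ)
      = deriv (fun t => ‖deriv c t‖⁻¹ * deriv b t) θ - deriv (fun t => a t * curvature c t) θ
        - (inner ℝ (deriv (unitTangent c) θ) (unitNormal c θ) : ℝ)
          * (‖deriv c θ‖⁻¹ * (deriv a θ
              + b θ * (inner ℝ (deriv (unitTangent c) θ) (unitNormal c θ) : ℝ))) := by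
    rw [← hwn]; linarith [key]
  rw [key']
  ring
end

section
/- Let c : ℝ → ℝ² be a smooth 2π-periodic regular curve (c'(θ) ≠ 0 for all θ), with unit tangent v = c'/‖c'‖, unit normal n = J v, arc-length derivative D_s f = f'/‖c'‖, and curvature κ = ⟨D_s v, n⟩. Then every smooth 2π-periodic map k : ℝ → ℝ² admits a unique decomposition k = f v + h, where f : ℝ → ℝ is smooth and 2π-periodic, and h : ℝ → ℝ² is smooth, 2π-periodic, and satisfies ⟨D_s² h(θ), v(θ)⟩ + κ(θ) ⟨D_s h(θ), n(θ)⟩ = 0 for all θ together with ⟨h(0), v(0)⟩ = 0. -/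
set_option maxHeartbeats 1000000

open Real Function FormalMultilinearSeries
open scoped ENNReal NNReal

lemma contDiff_top_deriv {F : Type*} [NormedAddCommGroup F] [NormedSpace ℝ F] [CompleteSpace F]
    {f : ℝ → F} (hf : ContDiff ℝ (⊤ : ℕ∞) f) : ContDiff ℝ (⊤ : ℕ∞) (deriv f) := by
  exact (contDiff_infty_iff_deriv.mp hf).2

lemma contDiff_top_of_hasDerivAt {f g : ℝ → ℝ}
    (hf : ∀ x, HasDerivAt f (g x) x) (hg : ContDiff ℝ (⊤ : ℕ∞) g) : ContDiff ℝ (⊤ : ℕ∞) f := by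
  exact contDiff_infty_iff_deriv.mpr ⟨fun x => (hf x).differentiableAt,
    by rw [show deriv f = g from funext fun x => (hf x).deriv]; exact hg⟩

lemma inner_decomp (v u w : EuclideanSpace ℝ (Fin 2))
    (hv : (inner ℝ v v : ℝ) = 1) :
    (inner ℝ u w : ℝ) = (inner ℝ u v : ℝ) * (inner ℝ w v : ℝ)
      + (inner ℝ u (Jrot v) : ℝ) * (inner ℝ w (Jrot v) : ℝ) := by
  simp only [PiLp.inner_apply, RCLike.inner_apply, conj_trivial, Fin.sum_univ_two, Jrot,
    WithLp.equiv_symm_apply, PiLp.toLp_apply, Matrix.cons_val_zero, Matrix.cons_val_one, Matrix.head_cons] at *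
  linear_combination (-(u 0 * w 0) - u 1 * w 1) * hv

lemma periodic_deriv' {F : Type*} [NormedAddCommGroup F] [NormedSpace ℝ F]
    {f : ℝ → F} {T : ℝ} (hf : Function.Periodic f T) :
    Function.Periodic (deriv f) T := by
  intro x
  have hfe : (fun y => f (y + T)) = f := funext hf
  calc deriv f (x + T) = deriv (fun y => f (y + T)) x := (deriv_comp_add_const f T x).symm
    _ = deriv f x := by rw [hfe]

/-- The splitting `T_c Imm(S¹,ℝ²) = Tan(c) ⊕ Arc⁰(c)` of Lemma 3.2: every smooth
`2π`-periodic `k` is uniquely `k = f v + h` with `f` smooth `2π`-periodic scalar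
and `h` smooth, `2π`-periodic, constant-speed preserving
(`⟨D_s² h, v⟩ + κ ⟨D_s h, n⟩ = 0`) with `⟨h(0), v(0)⟩ = 0`. -/
theorem tangent_space_splitting (c : ℝ → EuclideanSpace ℝ (Fin 2))
    (hc : ContDiff ℝ (⊤ : ℕ∞) c) (hcper : Function.Periodic c (2 * π))
    (hreg : ∀ θ : ℝ, deriv c θ ≠ 0)
    (k : ℝ → EuclideanSpace ℝ (Fin 2))
    (hk : ContDiff ℝ (⊤ : ℕ∞) k) (hkper : Function.Periodic k (2 * π)) :
    ∃! p : (ℝ → ℝ) × (ℝ → EuclideanSpace ℝ (Fin 2)),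
      ContDiff ℝ (⊤ : ℕ∞) p.1 ∧ Function.Periodic p.1 (2 * π) ∧
      ContDiff ℝ (⊤ : ℕ∞) p.2 ∧ Function.Periodic p.2 (2 * π) ∧
      (∀ θ : ℝ, k θ = p.1 θ • unitTangent c θ + p.2 θ) ∧
      (∀ θ : ℝ,
        (inner ℝ (arcDeriv c (arcDeriv c p.2) θ) (unitTangent c θ) : ℝ) +
          curvature c θ * (inner ℝ (arcDeriv c p.2 θ) (unitNormal c θ) : ℝ) = 0) ∧
      (inner ℝ (p.2 0) (unitTangent c 0) : ℝ) = 0 := by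
  have hT0 : (0:ℝ) < 2 * π := by positivity
  have hc' : ContDiff ℝ (⊤ : ℕ∞) (deriv c) := contDiff_top_deriv hc
  have hk' : ContDiff ℝ (⊤ : ℕ∞) (deriv k) := contDiff_top_deriv hk
  have hkd : Differentiable ℝ k := hk.differentiable (by simp)
  have hc'per : Periodic (deriv c) (2 * π) := periodic_deriv' hcper
  have hk'per : Periodic (deriv k) (2 * π) := periodic_deriv' hkper
  set σ : ℝ → ℝ := fun θ => ‖deriv c θ‖ with hσdef
  have hσpos : ∀ θ, 0 < σ θ := fun θ => norm_pos_iff.mpr (hreg θ)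
  have hσne : ∀ θ, σ θ ≠ 0 := fun θ => (hσpos θ).ne'
  have hσ : ContDiff ℝ (⊤ : ℕ∞) σ := hc'.norm ℝ hreg
  have hσinv : ContDiff ℝ (⊤ : ℕ∞) (fun θ => (σ θ)⁻¹) := hσ.inv hσne
  have hσper : Periodic σ (2 * π) := fun x => by simp only [hσdef, hc'per x]
  set v : ℝ → EuclideanSpace ℝ (Fin 2) := unitTangent c with hvdef
  have hvc : ContDiff ℝ (⊤ : ℕ∞) v := hσinv.smul hc'
  have hvper : Periodic v (2 * π) := fun x => by
    simp only [hvdef, unitTangent, hc'per x]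
  have hvd : Differentiable ℝ v := hvc.differentiable (by simp)
  have hvv : ∀ θ, (inner ℝ (v θ) (v θ) : ℝ) = 1 := by
    intro θ
    have h1 : ‖v θ‖ = 1 := by
      rw [hvdef]
      simp only [unitTangent, norm_smul, norm_inv, norm_norm]
      exact inv_mul_cancel₀ (hσne θ)
    rw [real_inner_self_eq_norm_sq, h1]; norm_num
  have hv'v : ∀ θ, (inner ℝ (deriv v θ) (v θ) : ℝ) = 0 := by
    intro θ
    have h1 : HasDerivAt (fun t => (inner ℝ (v t) (v t) : ℝ))
        ((inner ℝ (v θ) (deriv v θ) : ℝ) + (inner ℝ (deriv v θ) (v θ) : ℝ)) θ :=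
      HasDerivAt.inner ℝ (hvd θ).hasDerivAt (hvd θ).hasDerivAt
    have h2 : (fun t => (inner ℝ (v t) (v t) : ℝ)) = fun _ => (1:ℝ) := funext hvv
    rw [h2] at h1
    have h3 := h1.unique (hasDerivAt_const θ (1:ℝ))
    have h4 : (inner ℝ (v θ) (deriv v θ) : ℝ) = (inner ℝ (deriv v θ) (v θ) : ℝ) :=
      real_inner_comm _ _
    linarith [h3, h4]
  -- the key identity
  have key : ∀ (h : ℝ → EuclideanSpace ℝ (Fin 2)), ContDiff ℝ (⊤ : ℕ∞) h → ∀ θ,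
      (inner ℝ (arcDeriv c (arcDeriv c h) θ) (v θ) : ℝ)
        + curvature c θ * (inner ℝ (arcDeriv c h θ) (unitNormal c θ) : ℝ)
      = (σ θ)⁻¹ * deriv (fun t => (inner ℝ (arcDeriv c h t) (v t) : ℝ)) θ := by
    intro h hh θ
    have hud : Differentiable ℝ (arcDeriv c h) :=
      (hσinv.smul (contDiff_top_deriv hh)).differentiable (by simp)
    have hg : HasDerivAt (fun t => (inner ℝ (arcDeriv c h t) (v t) : ℝ))
        ((inner ℝ (arcDeriv c h θ) (deriv v θ) : ℝ)
          + (inner ℝ (deriv (arcDeriv c h) θ) (v θ) : ℝ)) θ :=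
      HasDerivAt.inner ℝ (hud θ).hasDerivAt (hvd θ).hasDerivAt
    rw [hg.deriv]
    have h1 : (inner ℝ (arcDeriv c (arcDeriv c h) θ) (v θ) : ℝ)
        = (σ θ)⁻¹ * (inner ℝ (deriv (arcDeriv c h) θ) (v θ) : ℝ) := by
      rw [show arcDeriv c (arcDeriv c h) θ = (σ θ)⁻¹ • deriv (arcDeriv c h) θ from rfl]
      exact real_inner_smul_left _ _ _
    have hκ : curvature c θ = (σ θ)⁻¹ * (inner ℝ (deriv v θ) (Jrot (v θ)) : ℝ) := by
      rw [curvature, unitNormal, ← hvdef,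
        show arcDeriv c v θ = (σ θ)⁻¹ • deriv v θ from rfl]
      exact real_inner_smul_left _ _ _
    have hn : (inner ℝ (arcDeriv c h θ) (unitNormal c θ) : ℝ)
        = (inner ℝ (arcDeriv c h θ) (Jrot (v θ)) : ℝ) := by
      rw [unitNormal, ← hvdef]
    have hdec := inner_decomp (v θ) (arcDeriv c h θ) (deriv v θ) (hvv θ)
    rw [h1, hκ, hn]
    rw [hdec, hv'v θ]
    ring
  -- construction of f
  set φ : ℝ → ℝ := fun θ => (inner ℝ (deriv k θ) (v θ) : ℝ) with hφdef
  have hφc : ContDiff ℝ (⊤ : ℕ∞) φ := ContDiff.inner ℝ hk' hvc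
  have hφper : Periodic φ (2 * π) := fun x => by
    simp only [hφdef, hk'per x, hvper x]
  set lam : ℝ := (∫ t in (0:ℝ)..2 * π, φ t) / (∫ t in (0:ℝ)..2 * π, σ t) with hlamdef
  set ψ : ℝ → ℝ := fun t => φ t - lam * σ t with hψdef
  have hψc : ContDiff ℝ (⊤ : ℕ∞) ψ := hφc.sub (contDiff_const.mul hσ)
  have hψper : Periodic ψ (2 * π) := fun x => by
    simp only [hψdef, hφper x, hσper x]
  have hLpos : 0 < ∫ t in (0:ℝ)..2 * π, σ t :=
    intervalIntegral.intervalIntegral_pos_of_pos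
      (hσ.continuous.intervalIntegrable 0 (2 * π)) hσpos hT0
  have hψint : ∫ t in (0:ℝ)..2 * π, ψ t = 0 := by
    rw [hψdef]
    rw [intervalIntegral.integral_sub (hφc.continuous.intervalIntegrable _ _)
      ((contDiff_const.mul hσ).continuous.intervalIntegrable _ _)]
    rw [intervalIntegral.integral_const_mul]
    rw [hlamdef]
    field_simp
    ring
  set f : ℝ → ℝ := fun θ => (inner ℝ (k 0) (v 0) : ℝ) + ∫ t in (0:ℝ)..θ, ψ t with hfdef
  have hfd : ∀ θ, HasDerivAt f (ψ θ) θ := by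
    intro θ
    have h1 : HasDerivAt (fun u => ∫ t in (0:ℝ)..u, ψ t) (ψ θ) θ :=
      intervalIntegral.integral_hasDerivAt_right
        (hψc.continuous.intervalIntegrable 0 θ)
        (hψc.continuous.stronglyMeasurableAtFilter _ _)
        hψc.continuous.continuousAt
    exact h1.const_add _
  have hfC : ContDiff ℝ (⊤ : ℕ∞) f := contDiff_top_of_hasDerivAt hfd hψc
  have hfper : Periodic f (2 * π) := by
    intro x
    have h1 : (∫ t in (0:ℝ)..x, ψ t) + ∫ t in x..x + 2 * π, ψ t
        = ∫ t in (0:ℝ)..x + 2 * π, ψ t :=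
      intervalIntegral.integral_add_adjacent_intervals
        (hψc.continuous.intervalIntegrable _ _) (hψc.continuous.intervalIntegrable _ _)
    have h2 : ∫ t in x..x + 2 * π, ψ t = ∫ t in (0:ℝ)..2 * π, ψ t := by
      simpa using hψper.intervalIntegral_add_eq x 0
    simp only [hfdef, ← h1, h2, hψint, add_zero]
  have hf0 : f 0 = (inner ℝ (k 0) (v 0) : ℝ) := by simp [hfdef]
  -- construction of h
  set h : ℝ → EuclideanSpace ℝ (Fin 2) := fun θ => k θ - f θ • v θ with hhdef
  have hhC : ContDiff ℝ (⊤ : ℕ∞) h := hk.sub (hfC.smul hvc)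
  have hhper : Periodic h (2 * π) := fun x => by
    simp only [hhdef, hkper x, hfper x, hvper x]
  have hh0 : (inner ℝ (h 0) (v 0) : ℝ) = 0 := by
    simp only [hhdef, inner_sub_left, real_inner_smul_left, hvv 0, hf0, mul_one, sub_self]
  have hdecompf : ∀ θ, k θ = f θ • v θ + h θ := by
    intro θ; simp [hhdef]
  -- the inner ℝ product ⟨D_s h, v⟩ is constantly lam
  have hgconst : ∀ θ, (inner ℝ (arcDeriv c h θ) (v θ) : ℝ) = lam := by
    intro θ
    have hdh : HasDerivAt h (deriv k θ - (f θ • deriv v θ + ψ θ • v θ)) θ :=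
      (hkd θ).hasDerivAt.sub ((hfd θ).smul (hvd θ).hasDerivAt)
    have h1 : (inner ℝ (deriv h θ) (v θ) : ℝ) = lam * σ θ := by
      rw [hdh.deriv]
      rw [inner_sub_left, inner_add_left, real_inner_smul_left, real_inner_smul_left,
        hvv θ, hv'v θ]
      simp only [hψdef, hφdef]
      ring
    rw [show arcDeriv c h θ = (σ θ)⁻¹ • deriv h θ from rfl, real_inner_smul_left, h1]
    rw [mul_comm lam (σ θ), ← mul_assoc, inv_mul_cancel₀ (hσne θ), one_mul]
  -- the existence conditions
  refine ⟨(f, h), ⟨hfC, hfper, hhC, hhper, hdecompf, ?_, hh0⟩, ?_⟩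
  · intro θ
    rw [key h hhC θ]
    have : (fun t => (inner ℝ (arcDeriv c h t) (v t) : ℝ)) = fun _ => lam := funext hgconst
    rw [this, deriv_const]
    ring
  -- uniqueness
  · rintro ⟨f₁, h₁⟩ ⟨hf₁C, hf₁per, hh₁C, hh₁per, hdec₁, hcond₁, hh₁0⟩
    have hg₁C : ContDiff ℝ (⊤ : ℕ∞) (fun θ => (inner ℝ (arcDeriv c h₁ θ) (v θ) : ℝ)) :=
      ContDiff.inner ℝ (hσinv.smul (contDiff_top_deriv hh₁C)) hvc
    have hg₁' : ∀ θ, deriv (fun t => (inner ℝ (arcDeriv c h₁ t) (v t) : ℝ)) θ = 0 := by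
      intro θ
      have h1 := hcond₁ θ
      rw [key h₁ hh₁C θ] at h1
      rcases mul_eq_zero.mp h1 with h2 | h2
      · exact absurd h2 (inv_ne_zero (hσne θ))
      · exact h2
    have hg₁const : ∀ θ, (inner ℝ (arcDeriv c h₁ θ) (v θ) : ℝ)
        = (inner ℝ (arcDeriv c h₁ 0) (v 0) : ℝ) := fun θ =>
      is_const_of_deriv_eq_zero (hg₁C.differentiable (by simp)) hg₁' θ 0
    set μ : ℝ := (inner ℝ (arcDeriv c h₁ 0) (v 0) : ℝ) with hμdef
    have hh₁d : Differentiable ℝ h₁ := hh₁C.differentiable (by simp)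
    have hf₁d : Differentiable ℝ f₁ := hf₁C.differentiable (by simp)
    have hf₁' : ∀ θ, HasDerivAt f₁ (φ θ - μ * σ θ) θ := by
      intro θ
      have hke : k = fun t => f₁ t • v t + h₁ t := funext hdec₁
      have hD : HasDerivAt (fun t => f₁ t • v t + h₁ t)
          ((f₁ θ • deriv v θ + deriv f₁ θ • v θ) + deriv h₁ θ) θ :=
        ((hf₁d θ).hasDerivAt.smul (hvd θ).hasDerivAt).add (hh₁d θ).hasDerivAt
      rw [← hke] at hD
      have hk1 : deriv k θ = (f₁ θ • deriv v θ + deriv f₁ θ • v θ) + deriv h₁ θ := hD.deriv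
      have h2 : φ θ = deriv f₁ θ + (inner ℝ (deriv h₁ θ) (v θ) : ℝ) := by
        rw [hφdef]
        simp only [hk1, inner_add_left, real_inner_smul_left, hvv θ, hv'v θ]
        ring
      have h3 : (inner ℝ (deriv h₁ θ) (v θ) : ℝ) = μ * σ θ := by
        have h4 := hg₁const θ
        rw [show arcDeriv c h₁ θ = (σ θ)⁻¹ • deriv h₁ θ from rfl,
          real_inner_smul_left] at h4
        have h6 : (inner ℝ (deriv h₁ θ) (v θ) : ℝ)
            = σ θ * ((σ θ)⁻¹ * (inner ℝ (deriv h₁ θ) (v θ) : ℝ)) := by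
          rw [← mul_assoc, mul_inv_cancel₀ (hσne θ), one_mul]
        rw [h6, h4]
        ring
      have h5 : deriv f₁ θ = φ θ - μ * σ θ := by rw [h2, h3]; ring
      exact h5 ▸ (hf₁d θ).hasDerivAt
    -- μ = lam
    have hμlam : μ = lam := by
      have hFTC : ∫ t in (0:ℝ)..2 * π, (φ t - μ * σ t) = f₁ (2 * π) - f₁ 0 := by
        have hder : deriv f₁ = fun t => φ t - μ * σ t := funext fun t => (hf₁' t).deriv
        rw [← hder]
        exact intervalIntegral.integral_deriv_eq_sub (fun x _ => (hf₁d x))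
          (hder ▸ ((hφc.sub (contDiff_const.mul hσ)).continuous.intervalIntegrable _ _))
      have hper0 : f₁ (2 * π) = f₁ 0 := by
        have := hf₁per 0; simpa using this
      rw [hper0, sub_self] at hFTC
      rw [intervalIntegral.integral_sub (hφc.continuous.intervalIntegrable _ _)
        ((contDiff_const.mul hσ).continuous.intervalIntegrable _ _),
        intervalIntegral.integral_const_mul] at hFTC
      rw [hlamdef]
      field_simp
      linarith [hFTC]
    have hf₁0 : f₁ 0 = f 0 := by
      have h1 := hdec₁ 0
      have h2 : (inner ℝ (k 0) (v 0) : ℝ) = f₁ 0 + (inner ℝ (h₁ 0) (v 0) : ℝ) := by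
        rw [h1, inner_add_left, real_inner_smul_left, hvv 0]; ring
      rw [hf0, h2, hh₁0, add_zero]
    have hf₁f : ∀ θ, f₁ θ = f θ := by
      intro θ
      have hd0 : ∀ x, deriv (fun t => f₁ t - f t) x = 0 := by
        intro x
        have : HasDerivAt (fun t => f₁ t - f t) (φ x - μ * σ x - ψ x) x := ((hf₁' x).sub (hfd x))
        rw [this.deriv, hμlam]
        simp [hψdef]
      have hconst := is_const_of_deriv_eq_zero
        (fun x => ((hf₁d x).sub (hfd x).differentiableAt)) hd0 θ 0
      have : f₁ 0 - f 0 = 0 := by rw [hf₁0]; ring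
      have h6 : f₁ θ - f θ = f₁ 0 - f 0 := hconst
      linarith [h6, this]
    have hh₁h : ∀ θ, h₁ θ = h θ := by
      intro θ
      have h1 := hdec₁ θ
      rw [hhdef]
      simp only
      rw [← hf₁f θ, h1]
      abel
    exact Prod.ext (funext hf₁f) (funext hh₁h)
end
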